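/- Let n ≥ 1 and let t denote the variable X of the polynomial ring ℤ[t]. Let A'_n and B'_n be the n×n matrices over ℤ[t] with entries (A'_n)_{ij} = −2 if i ≤ j and −3 if i > j, and (B'_n)_{ij} = −3 if i ≤ j and −2 if i > j, and let S'_n be the 2n×2n block matrix [[0, A'_n],[B'_n, 0]]. Then det(t·S'_n − S'_nᵀ) = (3 − 2tⁿ)·(3tⁿ − 2) = −(6t^{2n} − 13tⁿ + 6) in ℤ[t]. -/

import Mathlib

/-!
Both off-diagonal blocks of `t S' - S'ᵀ` are matrices with one constant `x` above the diagonal,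
`d` on it and `y` below it. Adding `z` to every entry changes the determinant of such a matrix
affinely in `z`, and for `z = -x` resp. `z = -y` the matrix becomes triangular, so
`det * (x - y) = x (d - y)ⁿ - y (d - x)ⁿ`. For the two blocks `x - y = ±(t - 1)`, and cancelling
it gives `3 - 2tⁿ` and `(-1)ⁿ (3tⁿ - 2)`; the antidiagonal block shape contributes another `(-1)ⁿ`.
-/

open Polynomial Matrix

namespace Matrix

variable {R : Type*} [CommRing R] {m : Type*} [Fintype m] [DecidableEq m]

theorem det_fromBlocks_zero₁₁_zero₂₂ (B C : Matrix m m R) :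
    (fromBlocks 0 B C 0).det = (-1) ^ Fintype.card m * B.det * C.det := by
  have hJ : (fromBlocks 0 1 (-1) 0 : Matrix (m ⊕ m) (m ⊕ m) R).det = 1 := by
    rw [show (fromBlocks 0 1 (-1) 0 : Matrix (m ⊕ m) (m ⊕ m) R) =
        fromBlocks 1 1 0 1 * fromBlocks 1 0 (-1) 1 * fromBlocks 1 1 0 1 by
      simp [fromBlocks_multiply]]
    simp
  have hprod : fromBlocks 0 B C 0 * fromBlocks 0 1 (-1) 0 = fromBlocks (-B) 0 0 C := by
    simp [fromBlocks_multiply]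
  have h := congrArg det hprod
  rwa [det_mul, hJ, mul_one, det_fromBlocks_zero₂₁, det_neg] at h

theorem exists_det_add_smul_ones (M : Matrix m m R) :
    ∃ c, ∀ z : R, (M + z • of fun _ _ => (1 : R)).det = M.det + z * c := by
  cases isEmpty_or_nonempty m with
  | inl _ => exact ⟨0, fun z => by simp⟩
  | inr hm =>
    obtain ⟨k⟩ := hm
    -- subtracting row `k` from all other rows leaves `z` in row `k` only
    set N : Matrix m m R := of fun i j => if i = k then M k j else M i j - M k j
    have hN : ∀ z : R, (M + z • of fun _ _ => (1 : R)).det = N.det + z * (N.updateRow k 1).det := by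
      intro z
      rw [det_eq_of_forall_row_eq_smul_add_const (fun i => if i = k then 0 else 1) k (by simp)
        (B := N.updateRow k (N k + z • 1)), det_updateRow_add, det_updateRow_smul,
        updateRow_eq_self]
      intro i j
      by_cases hi : i = k
      · simp [hi, N]
      · simp [hi, N]
        ring
    refine ⟨(N.updateRow k 1).det, fun z => ?_⟩
    rw [hN, show M.det = N.det by simpa using hN 0]

section UpperDiagLower

variable {ι : Type*} [LinearOrder ι]

def upperDiagLower (x d y : R) : Matrix ι ι R :=
  of fun i j => if i < j then x else if i = j then d else y

theorem smul_sub_transpose_eq_upperDiagLower {A B : Matrix ι ι R} {a b a' b' : R}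
    (hA : ∀ i j, A i j = if i ≤ j then a else b) (hB : ∀ i j, B i j = if i ≤ j then a' else b')
    (t : R) :
    t • A - Bᵀ = upperDiagLower (t * a - b') (t * a - a') (t * b - a') := by
  ext i j
  simp only [sub_apply, smul_apply, transpose_apply, hA, hB, upperDiagLower, of_apply, smul_eq_mul]
  split_ifs <;> first | rfl | order

variable [Fintype ι]

theorem det_upperDiagLower_mul_sub (x d y : R) :
    (upperDiagLower x d y : Matrix ι ι R).det * (x - y) =
      x * (d - y) ^ Fintype.card ι - y * (d - x) ^ Fintype.card ι := by
  obtain ⟨c, hc⟩ := exists_det_add_smul_ones (upperDiagLower x d y : Matrix ι ι R)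
  have hx : (upperDiagLower x d y + (-x) • of fun _ _ => (1 : R) : Matrix ι ι R).det =
      (d - x) ^ Fintype.card ι := by
    rw [det_of_isLowerTriangular]
    · simp [upperDiagLower, sub_eq_add_neg]
    · intro i j hij
      simp [upperDiagLower, show i < j from hij]
  have hy : (upperDiagLower x d y + (-y) • of fun _ _ => (1 : R) : Matrix ι ι R).det =
      (d - y) ^ Fintype.card ι := by
    rw [det_of_isUpperTriangular]
    · simp [upperDiagLower, sub_eq_add_neg]
    · intro i j (hij : j < i)
      simp [upperDiagLower, hij.not_gt, hij.ne']
  rw [hc] at hx hy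
  linear_combination x * hy - y * hx

theorem det_upperDiagLower_eq [IsDomain R] {x d y p : R} (hxy : x ≠ y)
    (hp : p * (x - y) = x * (d - y) ^ Fintype.card ι - y * (d - x) ^ Fintype.card ι) :
    (upperDiagLower x d y : Matrix ι ι R).det = p :=
  mul_right_cancel₀ (sub_ne_zero.2 hxy) (by rw [det_upperDiagLower_mul_sub, hp])

end UpperDiagLower

end Matrix

theorem det_Seifert'_general (n : ℕ)
    (A B : Matrix (Fin n) (Fin n) (Polynomial ℤ))
    (hA : ∀ i j, A i j = if i ≤ j then -2 else -3)
    (hB : ∀ i j, B i j = if i ≤ j then -3 else -2)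
    (S : Matrix (Fin n ⊕ Fin n) (Fin n ⊕ Fin n) (Polynomial ℤ))
    (hS : S = Matrix.fromBlocks 0 A B 0) :
    ((X : Polynomial ℤ) • S - S.transpose).det = (3 - 2 * X ^ n) * (3 * X ^ n - 2) ∧
    (3 - 2 * (X : Polynomial ℤ) ^ n) * (3 * X ^ n - 2) = -(6 * X ^ (2 * n) - 13 * X ^ n + 6) := by
  refine ⟨?_, by ring⟩
  subst hS
  have hblocks : (X : ℤ[X]) • fromBlocks 0 A B 0 - (fromBlocks 0 A B 0)ᵀ =
      fromBlocks 0 ((X : ℤ[X]) • A - Bᵀ) ((X : ℤ[X]) • B - Aᵀ) 0 := by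
    simp [fromBlocks_transpose, fromBlocks_smul, sub_eq_add_neg, fromBlocks_neg, fromBlocks_add]
  have hsign : ((-1 : ℤ[X]) ^ n) ^ 2 = 1 := by
    rw [← pow_mul, pow_mul', neg_one_sq, one_pow]
  rw [hblocks, det_fromBlocks_zero₁₁_zero₂₂, smul_sub_transpose_eq_upperDiagLower hA hB,
    smul_sub_transpose_eq_upperDiagLower hB hA, det_upperDiagLower_eq (p := 3 - 2 * X ^ n) ?_ ?_,
    det_upperDiagLower_eq (p := (-1) ^ n * (3 * X ^ n - 2)) ?_ ?_, Fintype.card_fin]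
  · linear_combination (3 - 2 * (X : ℤ[X]) ^ n) * (3 * X ^ n - 2) * hsign
  · intro h
    simpa using congrArg (eval 0) h
  · rw [Fintype.card_fin]
    ring
  · intro h
    simpa using congrArg (eval 0) h
  · rw [Fintype.card_fin]
    ring

/-- `det (t·S'ₙ − S'ₙᵀ) = (3 − 2tⁿ)(3tⁿ − 2) = −(6t^{2n} − 13tⁿ + 6)` for the
Seifert matrix `S'ₙ = [[0, A'ₙ],[B'ₙ, 0]]` of `K'_{n,m}`. -/
theorem det_Seifert' (n : ℕ) (hn : 1 ≤ n)
    (A B : Matrix (Fin n) (Fin n) (Polynomial ℤ))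
    (hA : ∀ i j, A i j = if i ≤ j then -2 else -3)
    (hB : ∀ i j, B i j = if i ≤ j then -3 else -2)
    (S : Matrix (Fin n ⊕ Fin n) (Fin n ⊕ Fin n) (Polynomial ℤ))
    (hS : S = Matrix.fromBlocks 0 A B 0) :
    ((X : Polynomial ℤ) • S - S.transpose).det = (3 - 2 * X ^ n) * (3 * X ^ n - 2) ∧
    (3 - 2 * (X : Polynomial ℤ) ^ n) * (3 * X ^ n - 2) = -(6 * X ^ (2 * n) - 13 * X ^ n + 6) :=
  det_Seifert'_general n A B hA hB S hS
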